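/- arXiv:1612.00382 — 7 statements merged into one kernel-verified Lean document; each statement's English description precedes it below -/
import Mathlib

section
/- Let K = ℚ(√D) with D squarefree, ω ∈ O_K with tr(ω) ≠ 0, and L an odd squarefree positive integer. Define Φ_L(ω) = ∏_{ℓ | L} tr(ω^{L/ℓ})^{μ(ℓ)} and Ψ_L(ω) = ∏_{ℓ | L, ℓ > 1} tr(ω^{L/ℓ})^{−μ(ℓ)}. Then Φ_L(ω) and Ψ_L(ω) are integers and tr(ω^L) = Φ_L(ω)·Ψ_L(ω). -/
/-!
For odd `m`, `x ^ m + y ^ m = ∏_{d ∣ m} G_d`, where `G_d = ∏ (x + η y)` (`primitiveFactor x y d`)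
runs over the primitive `d`-th roots of unity `η`. Möbius inversion turns `Φ_L` into `G_L` and
`Ψ_L` into `∏_{d ∣ L, d < L} G_d`, so both are algebraic integers. Both are also rational, since
`s_d = x ^ d + y ^ d` is an integer by `s_{d+2} = (x + y) s_{d+1} - x y s_d`; hence they are
integers. Finally `Φ_L Ψ_L = s_L`: the factor `ℓ = 1` of `Φ_L` is `s_L` and the others cancel
against `Ψ_L`.
-/

open Finset Polynomial ArithmeticFunction
open scoped ArithmeticFunction.Moebius

theorem Nat.div_mem_divisors {d n : ℕ} (h : d ∈ n.divisors) : n / d ∈ n.divisors :=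
  Nat.mem_divisors.2 ⟨Nat.div_dvd_of_dvd (Nat.dvd_of_mem_divisors h), Nat.ne_zero_of_mem_divisors h⟩

theorem pow_add_pow_mem {A : Type*} [CommRing A] (R : Subring A) {x y : A} (hs : x + y ∈ R)
    (hp : x * y ∈ R) (d : ℕ) : x ^ d + y ^ d ∈ R := by
  induction d using Nat.strong_induction_on with
  | _ d ih =>
    match d, ih with
    | 0, _ => simpa using R.add_mem R.one_mem R.one_mem
    | 1, _ => simpa using hs
    | e + 2, ih =>
      have key : x ^ (e + 2) + y ^ (e + 2)
          = (x + y) * (x ^ (e + 1) + y ^ (e + 1)) - x * y * (x ^ e + y ^ e) := by ring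
      rw [key]
      exact R.sub_mem (R.mul_mem hs (ih _ (by omega))) (R.mul_mem hp (ih _ (by omega)))

theorem isIntegral_of_add_eq_of_mul_eq {R A : Type*} [CommRing R] [CommRing A] [Algebra R A]
    {x y : A} {t n : R} (ht : x + y = algebraMap R A t) (hn : x * y = algebraMap R A n) :
    IsIntegral R x := by
  refine ⟨X ^ 2 - C t * X + C n, by monicity!, ?_⟩
  simp only [eval₂_add, eval₂_sub, eval₂_mul, eval₂_pow, eval₂_X, eval₂_C, ← ht, ← hn]
  ring

theorem exists_intCast_eq_of_isIntegral {K : Type*} [Field K] [CharZero K] {r : K}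
    (hr : r ∈ (algebraMap ℚ K).fieldRange) (hint : IsIntegral ℤ r) : ∃ z : ℤ, (z : K) = r := by
  obtain ⟨q, rfl⟩ := hr
  have hq : IsIntegral ℤ q :=
    (isIntegral_algebraMap_iff (algebraMap ℚ K).injective).mp hint
  obtain ⟨z, rfl⟩ := IsIntegrallyClosed.isIntegral_iff.mp hq
  exact ⟨z, by simp⟩

theorem prod_pow_moebius_prod_divisors {G₀ : Type*} [CommGroupWithZero G₀] {f : ℕ → G₀} {L : ℕ}
    (hL : L ≠ 0) (hf : ∀ d ∈ L.divisors, f d ≠ 0) :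
    ∏ ℓ ∈ L.divisors, (∏ d ∈ (L / ℓ).divisors, f d) ^ μ ℓ = f L := by
  classical
  -- Möbius inversion wants nonvanishing at every `n > 0`: replace `f` by `1` off `L.divisors`
  set f' : ℕ → G₀ := fun d => if d ∣ L then f d else 1
  have hf' : ∀ n > 0, f' n ≠ 0 := fun n _ => by
    by_cases h : n ∣ L <;> simp [f', h, hf, hL]
  have hinv := (prod_eq_iff_prod_pow_moebius_eq_on_of_nonzero {n | n ∣ L}
    (fun _ _ hmn hn => hmn.trans hn) hf' (fun n _ => prod_ne_zero_iff.2 fun d hd => hf' d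
      (Nat.pos_of_mem_divisors hd))).mp (fun _ _ _ => rfl) L (Nat.pos_of_ne_zero hL) dvd_rfl
  rw [Nat.prod_divisorsAntidiagonal (fun i j => (∏ d ∈ j.divisors, f' d) ^ μ i)] at hinv
  simp only [f', if_pos dvd_rfl] at hinv
  rw [← hinv]
  refine prod_congr rfl fun ℓ hℓ => congrArg (· ^ μ ℓ) (prod_congr rfl fun d hd => ?_)
  have hdL : d ∣ L :=
    (Nat.dvd_of_mem_divisors hd).trans (Nat.dvd_of_mem_divisors (Nat.div_mem_divisors hℓ))
  exact (if_pos hdL).symm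

theorem prod_pow_moebius_mul_prod_pow_neg_moebius {G₀ : Type*} [CommGroupWithZero G₀]
    (g : ℕ → G₀) {L : ℕ} (hL : L ≠ 0) (hg : ∀ ℓ ∈ L.divisors, g ℓ ≠ 0) :
    (∏ ℓ ∈ L.divisors, g ℓ ^ μ ℓ) * ∏ ℓ ∈ L.divisors with 1 < ℓ, g ℓ ^ (-μ ℓ) = g 1 := by
  have hfilter : L.divisors.filter (1 < ·) = L.divisors.erase 1 := by
    ext ℓ
    simp only [mem_filter, mem_erase, Nat.mem_divisors]
    constructor
    · rintro ⟨hℓ, h1⟩; exact ⟨h1.ne', hℓ⟩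
    · rintro ⟨h1, hℓL, hL⟩
      have := Nat.pos_of_mem_divisors (Nat.mem_divisors.2 ⟨hℓL, hL⟩)
      exact ⟨⟨hℓL, hL⟩, by omega⟩
  rw [hfilter, ← mul_prod_erase _ _ (Nat.one_mem_divisors.2 hL), moebius_apply_one, zpow_one,
    mul_assoc, ← prod_mul_distrib, prod_eq_one, mul_one]
  intro ℓ hℓ
  rw [zpow_neg, mul_inv_cancel₀ (zpow_ne_zero _ (hg ℓ (mem_of_mem_erase hℓ)))]

section
variable {R : Type*} [CommRing R] [IsDomain R] (x y : R) {ζ : R} {L : ℕ}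

noncomputable def primitiveFactor (d : ℕ) : R :=
  ∏ η ∈ primitiveRoots d R, (x + η * y)

theorem pow_add_pow_eq_prod_primitiveFactor {m : ℕ} (hm : Odd m)
    (hζ : IsPrimitiveRoot ζ m) : x ^ m + y ^ m = ∏ d ∈ m.divisors, primitiveFactor x y d := by
  classical
  rw [hζ.pow_add_pow_eq_prod_add_mul x y hm, IsPrimitiveRoot.nthRoots_one_eq_biUnion_primitiveRoots,
    prod_biUnion fun a _ b _ hab => IsPrimitiveRoot.disjoint hab]
  rfl

theorem pow_add_pow_eq_prod_primitiveFactor_of_mem_divisors (hζ : IsPrimitiveRoot ζ L)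
    (hL : Odd L) {m : ℕ} (hm : m ∈ L.divisors) :
    x ^ m + y ^ m = ∏ d ∈ m.divisors, primitiveFactor x y d := by
  have hmL := Nat.dvd_of_mem_divisors hm
  have hζm : IsPrimitiveRoot (ζ ^ (L / m)) m := by
    simpa [Nat.div_div_self hmL hL.pos.ne'] using
      hζ.pow_of_dvd (Nat.div_pos (Nat.le_of_dvd hL.pos hmL) (Nat.pos_of_mem_divisors hm)).ne'
        (Nat.div_dvd_of_dvd hmL)
  exact pow_add_pow_eq_prod_primitiveFactor x y (hL.of_dvd_nat hmL) hζm

theorem isIntegral_primitiveFactor (hx : IsIntegral ℤ x) (hy : IsIntegral ℤ y) (d : ℕ) :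
    IsIntegral ℤ (primitiveFactor x y d) :=
  IsIntegral.prod _ fun η hη =>
    hx.add (((isPrimitiveRoot_of_mem_primitiveRoots hη).isIntegral
      (Nat.pos_of_ne_zero fun h => by simp [h] at hη)).mul hy)

end

section
variable {K : Type*} [Field K] (x y : K) {ζ : K} {L : ℕ}
  (hζ : IsPrimitiveRoot ζ L) (hL : Odd L) (hnz : ∀ d ∈ L.divisors, x ^ d + y ^ d ≠ 0)
include hζ hL hnz

theorem primitiveFactor_ne_zero {d : ℕ} (hd : d ∈ L.divisors) : primitiveFactor x y d ≠ 0 := by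
  have h := hnz d hd
  rw [pow_add_pow_eq_prod_primitiveFactor_of_mem_divisors x y hζ hL hd] at h
  exact prod_ne_zero_iff.mp h d (Nat.mem_divisors_self d (Nat.pos_of_mem_divisors hd).ne')

theorem prod_pow_moebius_pow_add_pow :
    ∏ ℓ ∈ L.divisors, (x ^ (L / ℓ) + y ^ (L / ℓ)) ^ μ ℓ = primitiveFactor x y L := by
  rw [← prod_pow_moebius_prod_divisors hL.pos.ne'
    fun d hd => primitiveFactor_ne_zero x y hζ hL hnz hd]
  refine prod_congr rfl fun ℓ hℓ => ?_
  rw [pow_add_pow_eq_prod_primitiveFactor_of_mem_divisors x y hζ hL (Nat.div_mem_divisors hℓ)]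

theorem prod_pow_neg_moebius_pow_add_pow :
    ∏ ℓ ∈ L.divisors with 1 < ℓ, (x ^ (L / ℓ) + y ^ (L / ℓ)) ^ (-μ ℓ)
      = ∏ d ∈ L.properDivisors, primitiveFactor x y d := by
  have hL0 := hL.pos.ne'
  have hLL := Nat.mem_divisors_self L hL0
  have h := prod_pow_moebius_mul_prod_pow_neg_moebius (fun ℓ => x ^ (L / ℓ) + y ^ (L / ℓ)) hL0
    fun ℓ hℓ => hnz _ (Nat.div_mem_divisors hℓ)
  have hSL : x ^ L + y ^ L
      = primitiveFactor x y L * ∏ d ∈ L.properDivisors, primitiveFactor x y d := by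
    rw [pow_add_pow_eq_prod_primitiveFactor_of_mem_divisors x y hζ hL hLL,
      ← Nat.insert_self_properDivisors hL0, prod_insert Nat.self_notMem_properDivisors]
  rw [prod_pow_moebius_pow_add_pow x y hζ hL hnz, Nat.div_one, hSL] at h
  exact mul_left_cancel₀ (primitiveFactor_ne_zero x y hζ hL hnz hLL) h

end

theorem exists_intCast_eq_prod_pow_moebius {K : Type*} [Field K] [CharZero K] {x y ζ : K}
    {L : ℕ} (hζ : IsPrimitiveRoot ζ L) (hL : Odd L) (hnz : ∀ d ∈ L.divisors, x ^ d + y ^ d ≠ 0)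
    {t n : ℤ} (ht : x + y = t) (hn : x * y = n) :
    (∃ Φ : ℤ, (Φ : K) = ∏ ℓ ∈ L.divisors, (x ^ (L / ℓ) + y ^ (L / ℓ)) ^ μ ℓ) ∧
      ∃ Ψ : ℤ, (Ψ : K) = ∏ ℓ ∈ L.divisors with 1 < ℓ, (x ^ (L / ℓ) + y ^ (L / ℓ)) ^ (-μ ℓ) := by
  have hx : IsIntegral ℤ x := isIntegral_of_add_eq_of_mul_eq ht hn
  have hy : IsIntegral ℤ y :=
    isIntegral_of_add_eq_of_mul_eq ((add_comm y x).trans ht) ((mul_comm y x).trans hn)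
  have hrat (d : ℕ) : x ^ d + y ^ d ∈ (algebraMap ℚ K).fieldRange := by
    obtain ⟨k, hk⟩ := Subring.mem_bot.mp <|
      pow_add_pow_mem ⊥ (Subring.mem_bot.mpr ⟨t, ht.symm⟩) (Subring.mem_bot.mpr ⟨n, hn.symm⟩) d
    exact ⟨k, by simp [← hk]⟩
  constructor
  · refine exists_intCast_eq_of_isIntegral (prod_mem fun ℓ _ => zpow_mem (hrat _) _) ?_
    rw [prod_pow_moebius_pow_add_pow x y hζ hL hnz]
    exact isIntegral_primitiveFactor x y hx hy L
  · refine exists_intCast_eq_of_isIntegral (prod_mem fun ℓ _ => zpow_mem (hrat _) _) ?_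
    rw [prod_pow_neg_moebius_pow_add_pow x y hζ hL hnz]
    exact IsIntegral.prod _ fun d _ => isIntegral_primitiveFactor x y hx hy d

theorem trace_pow_factorization_general
    (ω ωb : ℝ)
    (hint : ∃ t n : ℤ, (t : ℝ) = ω + ωb ∧ (n : ℝ) = ω * ωb)
    (L : ℕ) (hodd : Odd L) (hpos : 0 < L)
    (hnz : ∀ d ∈ L.divisors, ω ^ d + ωb ^ d ≠ 0) :
    ∃ Φ Ψ : ℤ,
      (Φ : ℝ) = ∏ ℓ ∈ L.divisors, (ω ^ (L / ℓ) + ωb ^ (L / ℓ)) ^ (ArithmeticFunction.moebius ℓ) ∧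
      (Ψ : ℝ) = ∏ ℓ ∈ L.divisors.filter (fun ℓ => 1 < ℓ),
          (ω ^ (L / ℓ) + ωb ^ (L / ℓ)) ^ (-(ArithmeticFunction.moebius ℓ)) ∧
      ((Φ * Ψ : ℤ) : ℝ) = ω ^ L + ωb ^ L := by
  obtain ⟨t, n, ht, hn⟩ := hint
  obtain ⟨⟨Φ, hΦ⟩, ⟨Ψ, hΨ⟩⟩ := exists_intCast_eq_prod_pow_moebius (x := (ω : ℂ)) (y := ωb)
    (Complex.isPrimitiveRoot_exp L hpos.ne') hodd (fun d hd => by exact_mod_cast hnz d hd)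
    (t := t) (n := n) (by exact_mod_cast ht.symm) (by exact_mod_cast hn.symm)
  have hΦ' : (Φ : ℝ) = ∏ ℓ ∈ L.divisors, (ω ^ (L / ℓ) + ωb ^ (L / ℓ)) ^ μ ℓ :=
    by exact_mod_cast hΦ
  have hΨ' : (Ψ : ℝ) = ∏ ℓ ∈ L.divisors with 1 < ℓ, (ω ^ (L / ℓ) + ωb ^ (L / ℓ)) ^ (-μ ℓ) :=
    by exact_mod_cast hΨ
  refine ⟨Φ, Ψ, hΦ', hΨ', ?_⟩
  rw [Int.cast_mul, hΦ', hΨ', prod_pow_moebius_mul_prod_pow_neg_moebius _ hpos.ne', Nat.div_one]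
  exact fun ℓ hℓ => hnz _ (Nat.div_mem_divisors hℓ)

/-- Let `ω = a + b√D ∈ O_K` with `tr ω ≠ 0` and `L` odd squarefree positive. With
`Φ_L(ω) = ∏_{ℓ ∣ L} tr(ω^{L/ℓ})^{μ(ℓ)}` and `Ψ_L(ω) = ∏_{ℓ ∣ L, ℓ > 1} tr(ω^{L/ℓ})^{-μ(ℓ)}`
(assuming all the traces involved are nonzero), both `Φ_L(ω)` and `Ψ_L(ω)` are integers and
`tr(ω^L) = Φ_L(ω)·Ψ_L(ω)`. -/
theorem trace_pow_factorization
    (D : ℕ) (hD : Squarefree D) (hD1 : 1 < D) (a b : ℚ)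
    (ω ωb : ℝ) (hω : ω = a + b * Real.sqrt D) (hωb : ωb = a - b * Real.sqrt D)
    (hint : ∃ t n : ℤ, (t : ℝ) = ω + ωb ∧ (n : ℝ) = ω * ωb)
    (htr : ω + ωb ≠ 0)
    (L : ℕ) (hodd : Odd L) (hsf : Squarefree L) (hpos : 0 < L)
    (hnz : ∀ d ∈ L.divisors, ω ^ d + ωb ^ d ≠ 0) :
    ∃ Φ Ψ : ℤ,
      (Φ : ℝ) = ∏ ℓ ∈ L.divisors, (ω ^ (L / ℓ) + ωb ^ (L / ℓ)) ^ (ArithmeticFunction.moebius ℓ) ∧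
      (Ψ : ℝ) = ∏ ℓ ∈ L.divisors.filter (fun ℓ => 1 < ℓ),
          (ω ^ (L / ℓ) + ωb ^ (L / ℓ)) ^ (-(ArithmeticFunction.moebius ℓ)) ∧
      ((Φ * Ψ : ℤ) : ℝ) = ω ^ L + ωb ^ L :=
  trace_pow_factorization_general ω ωb hint L hodd hpos hnz
end

section
/- Let ω be an element of a real quadratic field embedded in ℝ (with conjugate ω̄) satisfying |ω̄/ω| ≤ 1/2. Then for every positive integer m, e^{−2^{1−m}} ≤ |ω^m + ω̄^m| / |ω|^m ≤ e^{2^{1−m}}. -/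
/-!
Dividing by `ω ^ m` turns the quotient into `|1 + r ^ m|` with `r = ω̄ / ω`, and `|r ^ m| ≤ t`
for `t = 2 ^ (-m) ≤ 1 / 2`. Hence `1 - t ≤ |1 + r ^ m| ≤ 1 + t`, and on `[0, 1/2]` the interval
`[1 - t, 1 + t]` lies inside `[exp (-2t), exp (2t)]`, where `2t = 2 ^ (1 - m)`.
-/

open Real

/-- `exp (-2t) ≤ 1 / (1 + 2t) ≤ 1 - t`, the second step since `(1 - t)(1 + 2t) = 1 + t(1 - 2t)`. -/
lemma exp_neg_two_mul_le_one_sub {t : ℝ} (ht₀ : 0 ≤ t) (ht : t ≤ 1 / 2) :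
    exp (-(2 * t)) ≤ 1 - t := by
  have hexp : 1 + 2 * t ≤ exp (2 * t) := by linarith [add_one_le_exp (2 * t)]
  rw [exp_neg, inv_le_iff_one_le_mul₀ (exp_pos _)]
  calc 1 ≤ (1 - t) * (1 + 2 * t) := by nlinarith
    _ ≤ (1 - t) * exp (2 * t) := by gcongr; linarith

lemma exp_neg_two_mul_le_abs_one_add {x t : ℝ} (hx : |x| ≤ t) (ht : t ≤ 1 / 2) :
    exp (-(2 * t)) ≤ |1 + x| := by
  calc exp (-(2 * t)) ≤ 1 - t := exp_neg_two_mul_le_one_sub ((abs_nonneg x).trans hx) ht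
    _ ≤ 1 - |x| := by linarith
    _ ≤ |1 + x| := by simpa using abs_sub_abs_le_abs_add 1 x

lemma abs_one_add_le_exp_two_mul {x t : ℝ} (hx : |x| ≤ t) : |1 + x| ≤ exp (2 * t) := by
  calc |1 + x| ≤ 1 + |x| := by simpa using abs_add_le 1 x
    _ ≤ 1 + t := by linarith
    _ ≤ exp (2 * t) := by linarith [add_one_le_exp (2 * t), abs_nonneg x]

lemma abs_pow_add_pow_div_abs_pow {x y : ℝ} (hx : x ≠ 0) (m : ℕ) :
    |x ^ m + y ^ m| / |x| ^ m = |1 + (y / x) ^ m| := by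
  rw [← abs_pow, ← abs_div, add_div, div_self (pow_ne_zero m hx), div_pow]

lemma two_zpow_one_sub (m : ℕ) : (2 : ℝ) ^ ((1 : ℤ) - m) = 2 * (1 / 2) ^ m := by
  rw [zpow_sub₀ two_ne_zero, zpow_one, zpow_natCast, one_div_pow, div_eq_mul_one_div]

theorem trace_pow_size_estimate_general
    (ω ωb : ℝ)
    (hω0 : ω ≠ 0) (hratio : |ωb / ω| ≤ 1 / 2)
    (m : ℕ) (hm : 1 ≤ m) :
    Real.exp (-(2 : ℝ) ^ ((1 : ℤ) - m)) ≤ |ω ^ m + ωb ^ m| / |ω| ^ m ∧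
    |ω ^ m + ωb ^ m| / |ω| ^ m ≤ Real.exp ((2 : ℝ) ^ ((1 : ℤ) - m)) := by
  have hpow : |(ωb / ω) ^ m| ≤ (1 / 2) ^ m := by
    rw [abs_pow]
    exact pow_le_pow_left₀ (abs_nonneg _) hratio m
  have hhalf : ((1 : ℝ) / 2) ^ m ≤ 1 / 2 :=
    pow_le_of_le_one (by norm_num) (by norm_num) (by omega)
  rw [abs_pow_add_pow_div_abs_pow hω0, two_zpow_one_sub]
  exact ⟨exp_neg_two_mul_le_abs_one_add hpow hhalf, abs_one_add_le_exp_two_mul hpow⟩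

/-- Let `ω = a + b√D` be a nonzero element of a real quadratic field embedded in `ℝ`, with
conjugate `ω̄ = a - b√D`, satisfying `|ω̄/ω| ≤ 1/2`. Then for every positive integer `m`,
`e^{-2^{1-m}} ≤ |ω^m + ω̄^m| / |ω|^m ≤ e^{2^{1-m}}`. -/
theorem trace_pow_size_estimate
    (D : ℕ) (hD : Squarefree D) (hD1 : 1 < D) (a b : ℚ)
    (ω ωb : ℝ) (hω : ω = a + b * Real.sqrt D) (hωb : ωb = a - b * Real.sqrt D)
    (hω0 : ω ≠ 0) (hratio : |ωb / ω| ≤ 1 / 2)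
    (m : ℕ) (hm : 1 ≤ m) :
    Real.exp (-(2 : ℝ) ^ ((1 : ℤ) - m)) ≤ |ω ^ m + ωb ^ m| / |ω| ^ m ∧
    |ω ^ m + ωb ^ m| / |ω| ^ m ≤ Real.exp ((2 : ℝ) ^ ((1 : ℤ) - m)) :=
  trace_pow_size_estimate_general ω ωb hω0 hratio m hm
end

section
/- Let ω be an algebraic integer in a real quadratic field with |ω̄/ω| ≤ 1/2 and let L be an odd squarefree positive integer. Then with Φ_L(ω) = ∏_{ℓ|L} tr(ω^{L/ℓ})^{μ(ℓ)} and Ψ_L(ω) = tr(ω^L)/Φ_L(ω), one has e^{−4}|ω|^{φ(L)} ≤ |Φ_L(ω)| ≤ e^{4}|ω|^{φ(L)} and e^{−4}|ω|^{L−φ(L)} ≤ |Ψ_L(ω)| ≤ e^{4}|ω|^{L−φ(L)}, where φ is Euler's totient function. -/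
/-!
Writing `r = ω̄/ω`, each trace factors as `ω^m + ω̄^m = ω^m (1 + r^m)`. Möbius inversion of
`∑_{d ∣ L} φ(d) = L` collects the powers of `ω` in `Φ_L(ω)` into `ω^{φ(L)}`, and what is left
is `E = ∏_{ℓ ∣ L} (1 + r^{L/ℓ})^{μ(ℓ)}`, with `|log |E|| ≤ ∑_{m ≥ 1} 2 |r|^m ≤ 2` because
`|log (1 + x)| ≤ 2|x|` for `|x| ≤ 1/2`. Likewise `Ψ_L(ω) = ω^{L-φ(L)} (1 + r^L) / E`.
-/

open ArithmeticFunction Real Finset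
open scoped ArithmeticFunction.Moebius

theorem Finset.prod_zpow_eq_zpow_sum₀ {ι G : Type*} [CommGroupWithZero G] {x : G} (hx : x ≠ 0)
    (s : Finset ι) (f : ι → ℤ) : ∏ i ∈ s, x ^ f i = x ^ ∑ i ∈ s, f i := by
  classical
  induction s using Finset.induction_on with
  | empty => simp
  | insert i s hi ih => rw [prod_insert hi, sum_insert hi, ih, zpow_add₀ hx]

theorem Nat.totient_eq_sum_moebius_mul_div {R : Type*} [NonAssocRing R] {n : ℕ} (hn : 0 < n) :
    (n.totient : R) = ∑ d ∈ n.divisors, (μ d : R) * (n / d : ℕ) := by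
  have hinv := sum_eq_iff_sum_mul_moebius_eq (f := fun m => (m.totient : R))
    (g := fun m => (m : R)) |>.mp (fun m _ => by rw [← Nat.cast_sum, Nat.sum_totient]) n hn
  rw [← hinv]
  exact Nat.sum_divisorsAntidiagonal (fun i j => (μ i : R) * (j : R))

theorem pow_add_pow_eq_pow_mul_one_add_div_pow {K : Type*} [Field K] {x : K} (hx : x ≠ 0)
    (y : K) (m : ℕ) : x ^ m + y ^ m = x ^ m * (1 + (y / x) ^ m) := by
  rw [div_pow, mul_add, mul_one, mul_div_cancel₀ _ (pow_ne_zero m hx)]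

theorem abs_log_abs_one_add_le {x : ℝ} (hx : |x| ≤ 1 / 2) : |log (|1 + x|)| ≤ 2 * |x| := by
  have hlow : 1 - |x| ≤ |1 + x| := by
    simpa using abs_sub_abs_le_abs_sub 1 (-x)
  have hup : |1 + x| ≤ 1 + |x| := by simpa using abs_add_le 1 x
  have hpos : 0 < |1 + x| := by linarith
  rw [abs_le]
  constructor
  · -- with `c = |1 + x| ≥ 1/2`: `log c ≥ 1 - 1/c = (c - 1)/c ≥ -|x|/c ≥ -2|x|`
    have hinv : 1 - |1 + x|⁻¹ = (|1 + x| - 1) / |1 + x| := by field_simp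
    have hquot : -(2 * |x|) ≤ (|1 + x| - 1) / |1 + x| := by
      rw [le_div_iff₀ hpos]
      nlinarith [abs_nonneg x]
    linarith [one_sub_inv_le_log_of_pos hpos]
  · linarith [log_le_sub_one_of_pos hpos, abs_nonneg x]

theorem abs_log_abs_one_add_pow_le {r : ℝ} (hr : |r| ≤ 1 / 2) {m : ℕ} (hm : m ≠ 0) :
    |log (|1 + r ^ m|)| ≤ 2 * (1 / 2) ^ m := by
  have hrm : |r ^ m| ≤ (1 / 2) ^ m := by
    rw [abs_pow]
    exact pow_le_pow_left₀ (abs_nonneg r) hr m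
  have hhalf : (1 / 2 : ℝ) ^ m ≤ 1 / 2 := pow_le_of_le_one (by norm_num) (by norm_num) hm
  linarith [abs_log_abs_one_add_le (hrm.trans hhalf)]

theorem sum_one_half_pow_le_one {s : Finset ℕ} (hs : 0 ∉ s) : ∑ d ∈ s, (1 / 2 : ℝ) ^ d ≤ 1 := by
  have h := summable_geometric_two.sum_le_tsum (insert 0 s) (fun _ _ => by positivity)
  rw [sum_insert hs, tsum_geometric_two, pow_zero] at h
  linarith

def moebiusCorrection {K : Type*} [Field K] (r : K) (L : ℕ) : K :=
  ∏ ℓ ∈ L.divisors, (1 + r ^ (L / ℓ)) ^ μ ℓ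

theorem one_add_pow_ne_zero {r : ℝ} (hr : |r| < 1) (m : ℕ) : 1 + r ^ m ≠ 0 := by
  rcases m.eq_zero_or_pos with rfl | hm
  · norm_num
  · have hrm : |r ^ m| < 1 := by rw [abs_pow]; exact pow_lt_one₀ (abs_nonneg r) hr hm.ne'
    intro h
    rw [eq_neg_of_add_eq_zero_right h, abs_neg, abs_one] at hrm
    exact lt_irrefl 1 hrm

theorem moebiusCorrection_ne_zero {r : ℝ} (hr : |r| < 1) (L : ℕ) : moebiusCorrection r L ≠ 0 :=
  prod_ne_zero_iff.mpr fun _ _ => zpow_ne_zero _ (one_add_pow_ne_zero hr _)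

theorem abs_log_abs_moebiusCorrection_le {r : ℝ} (hr : |r| ≤ 1 / 2) (L : ℕ) :
    |log (|moebiusCorrection r L|)| ≤ 2 := by
  have hr1 : |r| < 1 := hr.trans_lt (by norm_num)
  rw [log_abs, moebiusCorrection,
    log_prod fun ℓ _ => zpow_ne_zero _ (one_add_pow_ne_zero hr1 _)]
  calc |∑ ℓ ∈ L.divisors, log ((1 + r ^ (L / ℓ)) ^ μ ℓ)|
      ≤ ∑ ℓ ∈ L.divisors, 2 * (1 / 2 : ℝ) ^ (L / ℓ) := by
        refine (abs_sum_le_sum_abs _ _).trans (sum_le_sum fun ℓ hℓ => ?_)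
        have hdiv : L / ℓ ≠ 0 :=
          (Nat.div_pos (Nat.divisor_le hℓ) (Nat.pos_of_mem_divisors hℓ)).ne'
        have hμ : |(μ ℓ : ℝ)| ≤ 1 := by exact_mod_cast abs_moebius_le_one
        rw [log_zpow, abs_mul, ← log_abs]
        simpa using mul_le_mul hμ (abs_log_abs_one_add_pow_le hr hdiv) (abs_nonneg _) zero_le_one
    _ = 2 * ∑ d ∈ L.divisors, (1 / 2 : ℝ) ^ d := by
        rw [← mul_sum, Nat.sum_div_divisors L (fun d => (1 / 2 : ℝ) ^ d)]
    _ ≤ 2 := by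
        linarith [sum_one_half_pow_le_one (s := L.divisors) (by simp)]

theorem prod_divisors_pow_add_pow_zpow_moebius {K : Type*} [Field K] {ω ωb : K} (hω : ω ≠ 0)
    {L : ℕ} (hL : 0 < L) :
    ∏ ℓ ∈ L.divisors, (ω ^ (L / ℓ) + ωb ^ (L / ℓ)) ^ μ ℓ =
      ω ^ L.totient * moebiusCorrection (ωb / ω) L := by
  have hpow : ∏ ℓ ∈ L.divisors, (ω ^ (L / ℓ)) ^ μ ℓ = ω ^ L.totient := by
    simp_rw [← zpow_natCast, ← zpow_mul]
    rw [prod_zpow_eq_zpow_sum₀ hω, Nat.totient_eq_sum_moebius_mul_div (R := ℤ) hL]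
    simp_rw [Int.cast_id, mul_comm]
  simp_rw [pow_add_pow_eq_pow_mul_one_add_div_pow hω, mul_zpow]
  rw [prod_mul_distrib, hpow, moebiusCorrection]

theorem abs_mul_bounds_of_abs_log_le {x y C : ℝ} (hy : y ≠ 0) (h : |log (|y|)| ≤ C) :
    exp (-C) * |x| ≤ |x * y| ∧ |x * y| ≤ exp C * |x| := by
  rw [abs_le] at h
  have hlow : exp (-C) ≤ |y| := by
    rw [← exp_log (abs_pos.mpr hy)]
    exact exp_le_exp.mpr (by linarith)
  have hup : |y| ≤ exp C := by
    rw [← exp_log (abs_pos.mpr hy)]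
    exact exp_le_exp.mpr h.2
  rw [abs_mul, mul_comm |x|]
  exact ⟨mul_le_mul_of_nonneg_right hlow (abs_nonneg x),
    mul_le_mul_of_nonneg_right hup (abs_nonneg x)⟩

theorem trace_factors_size_general
    (ω ωb : ℝ)
    (hω0 : ω ≠ 0) (hratio : |ωb / ω| ≤ 1 / 2)
    (L : ℕ) (hpos : 0 < L)
    (Φ Ψ : ℝ)
    (hΦ : Φ = ∏ ℓ ∈ L.divisors, (ω ^ (L / ℓ) + ωb ^ (L / ℓ)) ^ (ArithmeticFunction.moebius ℓ))
    (hΨ : Ψ = (ω ^ L + ωb ^ L) / Φ) :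
    Real.exp (-4) * |ω| ^ L.totient ≤ |Φ| ∧ |Φ| ≤ Real.exp 4 * |ω| ^ L.totient ∧
    Real.exp (-4) * |ω| ^ (L - L.totient) ≤ |Ψ| ∧ |Ψ| ≤ Real.exp 4 * |ω| ^ (L - L.totient) := by
  have hr1 : |ωb / ω| < 1 := hratio.trans_lt (by norm_num)
  set E := moebiusCorrection (ωb / ω) L
  have hE0 : E ≠ 0 := moebiusCorrection_ne_zero hr1 L
  have hEL : 1 + (ωb / ω) ^ L ≠ 0 := one_add_pow_ne_zero hr1 L
  have hΦ' : Φ = ω ^ L.totient * E := hΦ.trans (prod_divisors_pow_add_pow_zpow_moebius hω0 hpos)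
  have hΨ' : Ψ = ω ^ (L - L.totient) * ((1 + (ωb / ω) ^ L) / E) := by
    rw [hΨ, hΦ', pow_add_pow_eq_pow_mul_one_add_div_pow hω0, pow_sub₀ _ hω0 (Nat.totient_le L)]
    field_simp
  have hlogE : |log (|E|)| ≤ 2 := abs_log_abs_moebiusCorrection_le hratio L
  have hlogΨ : |log (|(1 + (ωb / ω) ^ L) / E|)| ≤ 4 := by
    rw [abs_div, log_div (abs_ne_zero.mpr hEL) (abs_ne_zero.mpr hE0)]
    have hhalf : (1 / 2 : ℝ) ^ L ≤ 1 := pow_le_one₀ (by norm_num) (by norm_num)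
    linarith [abs_sub (log |1 + (ωb / ω) ^ L|) (log |E|),
      abs_log_abs_one_add_pow_le hratio hpos.ne']
  obtain ⟨hΦlow, hΦup⟩ := hΦ' ▸ abs_mul_bounds_of_abs_log_le (x := ω ^ L.totient) (C := 4) hE0
    (hlogE.trans (by norm_num))
  obtain ⟨hΨlow, hΨup⟩ := hΨ' ▸ abs_mul_bounds_of_abs_log_le (x := ω ^ (L - L.totient))
    (div_ne_zero hEL hE0) hlogΨ
  rw [abs_pow] at hΦlow hΦup hΨlow hΨup
  exact ⟨hΦlow, hΦup, hΨlow, hΨup⟩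

/-- Let `ω = a + b√D` be a quadratic algebraic integer with `|ω̄/ω| ≤ 1/2` and `L` odd
squarefree positive. With `Φ_L(ω) = ∏_{ℓ∣L} tr(ω^{L/ℓ})^{μ(ℓ)}` and `Ψ_L(ω) = tr(ω^L)/Φ_L(ω)`:
`e^{-4}|ω|^{φ(L)} ≤ |Φ_L(ω)| ≤ e^4 |ω|^{φ(L)}` and
`e^{-4}|ω|^{L-φ(L)} ≤ |Ψ_L(ω)| ≤ e^4 |ω|^{L-φ(L)}`. -/
theorem trace_factors_size
    (D : ℕ) (hD : Squarefree D) (hD1 : 1 < D) (a b : ℚ)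
    (ω ωb : ℝ) (hω : ω = a + b * Real.sqrt D) (hωb : ωb = a - b * Real.sqrt D)
    (hint : ∃ t n : ℤ, (t : ℝ) = ω + ωb ∧ (n : ℝ) = ω * ωb)
    (hω0 : ω ≠ 0) (hratio : |ωb / ω| ≤ 1 / 2)
    (L : ℕ) (hodd : Odd L) (hsf : Squarefree L) (hpos : 0 < L)
    (Φ Ψ : ℝ)
    (hΦ : Φ = ∏ ℓ ∈ L.divisors, (ω ^ (L / ℓ) + ωb ^ (L / ℓ)) ^ (ArithmeticFunction.moebius ℓ))
    (hΨ : Ψ = (ω ^ L + ωb ^ L) / Φ) :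
    Real.exp (-4) * |ω| ^ L.totient ≤ |Φ| ∧ |Φ| ≤ Real.exp 4 * |ω| ^ L.totient ∧
    Real.exp (-4) * |ω| ^ (L - L.totient) ≤ |Ψ| ∧ |Ψ| ≤ Real.exp 4 * |ω| ^ (L - L.totient) :=
  trace_factors_size_general ω ωb hω0 hratio L hpos Φ Ψ hΦ hΨ
end

section
/- There exist two disjoint infinite sequences of odd primes {ℓ_i} and {ℓ'_i} such that ∏_{i=1}^∞ (1 − 1/ℓ_i) = ∏_{i=1}^∞ (1 − 1/ℓ'_i) = 1/2. -/
/-!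
Greedy construction: run through a set `S` of natural numbers with `∑_{p ∈ S} 1/p = ∞` in increasing
order, taking `p` whenever the partial product times `1 - 1/p` stays above the target `c`. The
partial products decrease to some `L ≥ c`, and since they stay above `c > 0`, the chosen `p` have
`∑ 1/p ≤ -log c`. So infinitely many elements of `S` are skipped, whereas if `L > c` every large
element of `S` would be taken; hence `L = c`. Applied to the odd primes with `c = 1/2`, and then
to the odd primes not chosen the first time (whose reciprocal sum still diverges), this gives the
two disjoint sequences.
-/

open Filter Topology

section Summability

variable {α E : Type*} [UniformSpace E] [AddCommGroup E] [IsUniformAddGroup E] [CompleteSpace E]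

theorem not_summable_indicator_diff {s t : Set α} {g : α → E} (hs : ¬Summable (s.indicator g))
    (ht : Summable (t.indicator g)) : ¬Summable ((s \ t).indicator g) := by
  intro hst
  have hsplit : s.indicator g = s.indicator (t.indicator g) + (s \ t).indicator g := by
    ext x
    by_cases hxs : x ∈ s <;> by_cases hxt : x ∈ t <;> simp [hxs, hxt]
  exact hs (hsplit ▸ (ht.indicator s).add hst)

end Summability

theorem Set.infinite_of_not_summable_indicator {α M : Type*} [AddCommMonoid M] [TopologicalSpace M]
    {s : Set α} {g : α → M} (h : ¬Summable (s.indicator g)) : s.Infinite :=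
  fun hs => h (summable_of_hasFiniteSupport (hs.subset Set.support_indicator_subset))

theorem Function.Injective.summable_indicator_range {α β M : Type*} [AddCommMonoid M]
    [TopologicalSpace M] {f : α → β} (hf : Function.Injective f) {g : β → M}
    (hg : Summable (g ∘ f)) : Summable ((Set.range f).indicator g) := by
  rw [← hf.summable_iff fun x hx => Set.indicator_of_notMem hx g]
  convert hg using 1
  ext i
  exact Set.indicator_of_mem (Set.mem_range_self i) g

theorem not_summable_one_div_on_odd_primes :
    ¬Summable ({p : ℕ | p.Prime ∧ Odd p}.indicator fun n => (1 : ℝ) / n) := by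
  have h : {p : ℕ | p.Prime ∧ Odd p} = {p | p.Prime} \ {2} := by
    ext p
    refine ⟨fun hp => ⟨hp.1, ?_⟩, fun hp => ⟨hp.1, hp.1.odd_of_ne_two hp.2⟩⟩
    rintro rfl
    exact Nat.not_odd_iff_even.2 even_two hp.2
  rw [h]
  exact not_summable_indicator_diff not_summable_one_div_on_primes
    (summable_of_hasFiniteSupport ((Set.finite_singleton 2).subset Set.support_indicator_subset))

theorem summable_of_le_prod_one_sub {x : ℕ → ℝ} {c : ℝ} (hc : 0 < c)
    (hx0 : ∀ i, 0 ≤ x i) (hx1 : ∀ i, x i ≤ 1)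
    (hprod : ∀ n, c ≤ ∏ i ∈ Finset.range n, (1 - x i)) : Summable x := by
  refine summable_of_sum_range_le (c := -Real.log c) hx0 fun n => ?_
  have : c ≤ Real.exp (-∑ i ∈ Finset.range n, x i) :=
    calc c ≤ ∏ i ∈ Finset.range n, (1 - x i) := hprod n
      _ ≤ ∏ i ∈ Finset.range n, Real.exp (-x i) :=
          Finset.prod_le_prod (fun i _ => sub_nonneg.2 (hx1 i))
            fun i _ => by linarith [Real.add_one_le_exp (-x i)]
      _ = Real.exp (-∑ i ∈ Finset.range n, x i) := by
          rw [← Real.exp_sum, Finset.sum_neg_distrib]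
  linarith [(Real.log_le_iff_le_exp hc).2 this]

theorem lt_mul_one_sub_one_div {c P x : ℝ} (hc : 0 ≤ c) (hcP : c < P) (hx : P / (P - c) < x) :
    c < P * (1 - 1 / x) := by
  have hPc : 0 < P - c := sub_pos.2 hcP
  have hx0 : 0 < x := (div_nonneg (hc.trans hcP.le) hPc.le).trans_lt hx
  rw [div_lt_iff₀ hPc] at hx
  rw [mul_one_sub, mul_one_div, lt_sub_comm, div_lt_iff₀ hx0]
  linarith

section Greedy

variable (S : Set ℕ) (c : ℝ)

def greedyCandidates (s : ℕ × ℝ) : Set ℕ :=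
  {p | p ∈ S ∧ s.1 < p ∧ c < s.2 * (1 - 1 / p)}

/-- After `n` steps the state is (last chosen element, product of `1 - 1 / p` over the chosen
`p`). -/
noncomputable def greedyState : ℕ → ℕ × ℝ
  | 0 => (0, 1)
  | n + 1 =>
    let p := sInf (greedyCandidates S c (greedyState n))
    (p, (greedyState n).2 * (1 - 1 / p))

noncomputable def greedySeq (n : ℕ) : ℕ := (greedyState S c (n + 1)).1

theorem greedyState_snd (n : ℕ) :
    (greedyState S c n).2 = ∏ i ∈ Finset.range n, (1 - 1 / (greedySeq S c i : ℝ)) := by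
  induction n with
  | zero => rfl
  | succ n ih => rw [Finset.prod_range_succ, ← ih]; rfl

variable {S c}

theorem greedyCandidates_nonempty (hS : S.Infinite) (hc : 0 ≤ c) {s : ℕ × ℝ} (hs : c < s.2) :
    (greedyCandidates S c s).Nonempty := by
  obtain ⟨p, hpS, hp⟩ := hS.exists_gt (max s.1 ⌈s.2 / (s.2 - c)⌉₊)
  exact ⟨p, hpS, (le_max_left _ _).trans_lt hp,
    lt_mul_one_sub_one_div hc hs (Nat.lt_of_ceil_lt ((le_max_right _ _).trans_lt hp))⟩

theorem lt_greedyState_snd (hS : S.Infinite) (hc0 : 0 ≤ c) (hc1 : c < 1) (n : ℕ) :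
    c < (greedyState S c n).2 := by
  induction n with
  | zero => exact hc1
  | succ n ih => exact (Nat.sInf_mem (greedyCandidates_nonempty hS hc0 ih)).2.2

theorem greedySeq_mem_greedyCandidates (hS : S.Infinite) (hc0 : 0 ≤ c) (hc1 : c < 1) (n : ℕ) :
    greedySeq S c n ∈ greedyCandidates S c (greedyState S c n) :=
  Nat.sInf_mem (greedyCandidates_nonempty hS hc0 (lt_greedyState_snd hS hc0 hc1 n))

theorem strictMono_greedySeq (hS : S.Infinite) (hc0 : 0 ≤ c) (hc1 : c < 1) :
    StrictMono (greedySeq S c) :=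
  strictMono_nat_of_lt_succ fun n => (greedySeq_mem_greedyCandidates hS hc0 hc1 (n + 1)).2.1

theorem antitone_greedyState_snd (hS : S.Infinite) (hc0 : 0 ≤ c) (hc1 : c < 1) :
    Antitone fun n => (greedyState S c n).2 :=
  antitone_nat_of_succ_le fun n => mul_le_of_le_one_right
    (hc0.trans (lt_greedyState_snd hS hc0 hc1 n).le) (Nat.one_sub_one_div_cast_le_one _)

theorem summable_one_div_greedySeq (hS : S.Infinite) (hc0 : 0 < c) (hc1 : c < 1) :
    Summable fun n => (1 : ℝ) / greedySeq S c n :=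
  summable_of_le_prod_one_sub hc0 (fun _ => Nat.one_div_cast_nonneg _)
    (fun _ => (one_div _).trans_le (Nat.cast_inv_le_one _)) fun n =>
      greedyState_snd S c n ▸ (lt_greedyState_snd hS hc0.le hc1 n).le

theorem tendsto_greedyState_snd (hS : ¬Summable (S.indicator fun n : ℕ => (1 : ℝ) / n))
    (hc0 : 0 < c) (hc1 : c < 1) : Tendsto (fun n => (greedyState S c n).2) atTop (𝓝 c) := by
  have hSinf := Set.infinite_of_not_summable_indicator hS
  have hmono := strictMono_greedySeq hSinf hc0.le hc1
  have hanti := antitone_greedyState_snd hSinf hc0.le hc1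
  obtain ⟨L, hL⟩ : ∃ L, Tendsto (fun n => (greedyState S c n).2) atTop (𝓝 L) :=
    ⟨_, tendsto_atTop_ciInf hanti ⟨c, Set.forall_mem_range.2 fun n =>
      (lt_greedyState_snd hSinf hc0.le hc1 n).le⟩⟩
  have hcL : c ≤ L := ge_of_tendsto' hL fun n => (lt_greedyState_snd hSinf hc0.le hc1 n).le
  obtain rfl | hcL := hcL.eq_or_lt
  · exact hL
  -- If the limit `L` exceeded `c`, every element of `S` above `L / (L - c)` would be a candidate
  -- when its turn comes, hence chosen; but infinitely many elements of `S` are never chosen.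
  have hrest : (S \ Set.range (greedySeq S c)).Infinite :=
    Set.infinite_of_not_summable_indicator (not_summable_indicator_diff hS
      (hmono.injective.summable_indicator_range (summable_one_div_greedySeq hSinf hc0 hc1)))
  obtain ⟨p, ⟨hpS, hp_not_chosen⟩, hp⟩ :=
    hrest.exists_gt (max (greedySeq S c 0) ⌈L / (L - c)⌉₊)
  obtain ⟨n, hnp, hpn⟩ := hmono.exists_between_of_tendsto_atTop hmono.tendsto_atTop
    ((le_max_left _ _).trans_lt hp)
  have hp_cand : p ∈ greedyCandidates S c (greedyState S c (n + 1)) := by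
    refine ⟨hpS, hnp, ?_⟩
    calc c < L * (1 - 1 / p) :=
          lt_mul_one_sub_one_div hc0.le hcL (Nat.lt_of_ceil_lt ((le_max_right _ _).trans_lt hp))
      _ ≤ (greedyState S c (n + 1)).2 * (1 - 1 / p) :=
          mul_le_mul_of_nonneg_right (hanti.le_of_tendsto hL _) (Nat.one_sub_one_div_cast_nonneg _)
  exact (hp_not_chosen ⟨n + 1, le_antisymm (Nat.sInf_le hp_cand) hpn⟩).elim

end Greedy

theorem exists_strictMono_tendsto_prod_one_sub_one_div {S : Set ℕ}
    (hS : ¬Summable (S.indicator fun n : ℕ => (1 : ℝ) / n)) {c : ℝ} (hc0 : 0 < c)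
    (hc1 : c < 1) :
    ∃ f : ℕ → ℕ, StrictMono f ∧ (∀ i, f i ∈ S) ∧ Summable (fun i => (1 : ℝ) / f i) ∧
      Tendsto (fun n => ∏ i ∈ Finset.range n, (1 - 1 / (f i : ℝ))) atTop (𝓝 c) := by
  have hSinf := Set.infinite_of_not_summable_indicator hS
  refine ⟨greedySeq S c, strictMono_greedySeq hSinf hc0.le hc1,
    fun n => (greedySeq_mem_greedyCandidates hSinf hc0.le hc1 n).1,
    summable_one_div_greedySeq hSinf hc0 hc1, ?_⟩
  simpa only [greedyState_snd] using tendsto_greedyState_snd hS hc0 hc1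

/-- There exist two disjoint infinite sequences of odd primes `{ℓ_i}` and `{ℓ'_i}` with
`∏_{i} (1 - 1/ℓ_i) = ∏_{i} (1 - 1/ℓ'_i) = 1/2` (as limits of the partial products). -/
theorem exists_disjoint_odd_prime_seqs_prod_half :
    ∃ f g : ℕ → ℕ,
      StrictMono f ∧ StrictMono g ∧
      (∀ i, (f i).Prime ∧ Odd (f i)) ∧ (∀ i, (g i).Prime ∧ Odd (g i)) ∧
      (∀ i j, f i ≠ g j) ∧
      Filter.Tendsto (fun n => ∏ i ∈ Finset.range n, (1 - 1 / (f i : ℝ)))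
        Filter.atTop (nhds (1 / 2)) ∧
      Filter.Tendsto (fun n => ∏ i ∈ Finset.range n, (1 - 1 / (g i : ℝ)))
        Filter.atTop (nhds (1 / 2)) := by
  obtain ⟨f, hf_mono, hf_mem, hf_sum, hf_lim⟩ :=
    exists_strictMono_tendsto_prod_one_sub_one_div not_summable_one_div_on_odd_primes
      one_half_pos one_half_lt_one
  obtain ⟨g, hg_mono, hg_mem, -, hg_lim⟩ :=
    exists_strictMono_tendsto_prod_one_sub_one_div
      (not_summable_indicator_diff not_summable_one_div_on_odd_primes
        (hf_mono.injective.summable_indicator_range hf_sum))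
      one_half_pos one_half_lt_one
  exact ⟨f, g, hf_mono, hg_mono, hf_mem, fun j => (hg_mem j).1,
    fun i j hij => (hg_mem j).2 ⟨i, hij⟩, hf_lim, hg_lim⟩
end

section
/- Let D > 1 be a squarefree integer. Then there exists ζ = x + y√D with x, y positive integers, x² − Dy² = 1, so that ζ is an algebraic integer in ℚ(√D) of norm 1 satisfying ζ > 1 > |ζ̄| under the real embedding with √D > 0. -/
/-!
Since `D > 1` is squarefree it is not a perfect square, so Pell's equation `x² - D y² = 1` has a
solution with `x, y > 0` (Dirichlet's approximation argument, `Pell.exists_pos_of_not_isSquare`).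
For `ζ = x + y√D` we have `ζ ζ̄ = 1`, and `ζ > 1` forces `0 < ζ̄ = ζ⁻¹ < 1`.
-/

theorem Squarefree.isUnit_of_isSquare {R : Type*} [Monoid R] {m : R} (hm : Squarefree m)
    (hsq : IsSquare m) : IsUnit m := by
  obtain ⟨r, rfl⟩ := hsq
  exact (hm r dvd_rfl).mul (hm r dvd_rfl)

theorem Nat.not_isSquare_intCast_of_squarefree {D : ℕ} (hD1 : 1 < D) (hD : Squarefree D) :
    ¬IsSquare (D : ℤ) := by
  rw [Int.isSquare_natCast_iff]
  intro hsq
  have := Nat.isUnit_iff.mp (hD.isUnit_of_isSquare hsq)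
  omega

theorem Pell.exists_nat_pos_of_not_isSquare {d : ℕ} (h₀ : 0 < d) (hd : ¬IsSquare (d : ℤ)) :
    ∃ x y : ℕ, 0 < x ∧ 0 < y ∧ (x : ℤ) ^ 2 - d * y ^ 2 = 1 := by
  obtain ⟨a, hx, hy⟩ := Pell.Solution₁.exists_pos_of_not_isSquare (by exact_mod_cast h₀) hd
  refine ⟨a.x.toNat, a.y.toNat, by omega, by omega, ?_⟩
  rw [Int.toNat_of_nonneg (by omega), Int.toNat_of_nonneg hy.le]
  exact a.prop

theorem one_lt_add_and_abs_sub_lt_one_of_sq_sub_sq_eq_one {a b : ℝ} (ha : 0 ≤ a) (hb : 0 < b)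
    (h : a ^ 2 - b ^ 2 = 1) : 1 < a + b ∧ |a - b| < 1 := by
  have hgt : 1 < a + b := by nlinarith
  have hconj : a - b = (a + b)⁻¹ := eq_inv_of_mul_eq_one_left (by linear_combination h)
  rw [hconj, abs_of_pos (by positivity)]
  exact ⟨hgt, inv_lt_one_of_one_lt₀ hgt⟩

/-- Let `D > 1` be squarefree. Then there exist positive integers `x, y` with `x² - Dy² = 1`,
so that `ζ = x + y√D` is an algebraic integer of `ℚ(√D)` of norm `1` satisfying
`ζ > 1 > |ζ̄|` in the real embedding with `√D > 0`. -/
theorem exists_pell_unit (D : ℕ) (hD1 : 1 < D) (hD : Squarefree D) :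
    ∃ x y : ℕ, 0 < x ∧ 0 < y ∧ (x : ℤ) ^ 2 - D * y ^ 2 = 1 ∧
      1 < (x : ℝ) + y * Real.sqrt D ∧ |(x : ℝ) - y * Real.sqrt D| < 1 := by
  obtain ⟨x, y, hx, hy, hpell⟩ := Pell.exists_nat_pos_of_not_isSquare (by omega)
    (Nat.not_isSquare_intCast_of_squarefree hD1 hD)
  refine ⟨x, y, hx, hy, hpell, one_lt_add_and_abs_sub_lt_one_of_sq_sub_sq_eq_one
    (by positivity) (by positivity) ?_⟩
  have hpellR : (x : ℝ) ^ 2 - D * y ^ 2 = 1 := by exact_mod_cast hpell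
  rw [mul_pow, Real.sq_sqrt (Nat.cast_nonneg D)]
  linear_combination hpellR
end

section
/- Let K = ℚ(√D) be real quadratic (real embedding fixed with √D > 0), ζ ∈ O_K with N(ζ) = ±1 and |ζ| > 1 > |ζ̄|, and β ∈ O_K with β ∉ ℚ and |β| > |β̄|. Set α = β², P_n = ttr(β²ζ^{2n}) = ttr(βζ^n)·tr(βζ^n) and Q_n = ttr(ζ^{2n}) = ttr(ζ^n)·tr(ζ^n). Then there is a constant C = C(α, D) such that |Q_n α − P_n| ≤ C/|Q_n| for all sufficiently large n. -/
/-- The twisted trace `ttr(ω) = (ω - ω̄)√D`, with `s = √D` and `x, xb` the two real embeddings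
of `ω`. -/
def twistedTrace (s x xb : ℝ) : ℝ := (x - xb) * s

theorem twistedTrace_ne_zero {s x xb : ℝ} (hs : s ≠ 0) (hx : |xb| < |x|) :
    twistedTrace s x xb ≠ 0 :=
  mul_ne_zero (sub_ne_zero.mpr fun h => hx.ne' (h ▸ rfl)) hs

/-- For a unit `z` the approximation error is `ttr(z) c - ttr(c z) = (c̄ - c) z̄ √D`, which is
small exactly where `ttr(z)` is large: their product is bounded by `|z z̄| = 1`. -/
theorem abs_twistedTrace_mul_sub_mul_abs_le {s c cb z zb : ℝ} (hz : |z * zb| = 1)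
    (hzb : |zb| ≤ 1) :
    |twistedTrace s z zb * c - twistedTrace s (c * z) (cb * zb)| * |twistedTrace s z zb| ≤
      2 * s ^ 2 * |c - cb| := by
  have herror : twistedTrace s z zb * c - twistedTrace s (c * z) (cb * zb) = (cb - c) * zb * s := by
    unfold twistedTrace; ring
  have hconj : |zb| * |z - zb| ≤ 2 :=
    calc |zb| * |z - zb| ≤ |zb| * (|z| + |zb|) := by gcongr; exact abs_sub _ _
      _ = |z * zb| + |zb| ^ 2 := by rw [abs_mul]; ring
      _ ≤ 2 := by rw [hz]; nlinarith [abs_nonneg zb]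
  calc |twistedTrace s z zb * c - twistedTrace s (c * z) (cb * zb)| * |twistedTrace s z zb|
      = s ^ 2 * |c - cb| * (|zb| * |z - zb|) := by
        rw [herror, twistedTrace, abs_mul, abs_mul, abs_mul, abs_sub_comm cb c, ← sq_abs s]; ring
    _ ≤ s ^ 2 * |c - cb| * 2 := by gcongr
    _ = 2 * s ^ 2 * |c - cb| := by ring

theorem twisted_trace_approximation_general
    (D : ℕ) (hD1 : 1 < D)
    (ζ ζb : ℝ)
    (hζnorm : ζ * ζb = 1 ∨ ζ * ζb = -1)
    (hζbig : 1 < |ζ|) (hζbsmall : |ζb| < 1)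
    (β βb : ℝ)
    (α : ℝ) (hα : α = β ^ 2)
    (P Q : ℕ → ℝ)
    (hP : ∀ n, P n = (β ^ 2 * ζ ^ (2 * n) - βb ^ 2 * ζb ^ (2 * n)) * Real.sqrt D)
    (hQ : ∀ n, Q n = (ζ ^ (2 * n) - ζb ^ (2 * n)) * Real.sqrt D) :
    ∃ C : ℝ, 0 < C ∧ ∃ N₀ : ℕ, ∀ n ≥ N₀, |Q n * α - P n| ≤ C / |Q n| := by
  have hs : 0 < Real.sqrt D := Real.sqrt_pos.mpr (by exact_mod_cast (zero_lt_one.trans hD1))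
  have hnorm : |ζ * ζb| = 1 := by rcases hζnorm with h | h <;> simp [h]
  refine ⟨2 * Real.sqrt D ^ 2 * |β ^ 2 - βb ^ 2| + 1, by positivity, 1, fun n hn => ?_⟩
  have hQn : Q n = twistedTrace (Real.sqrt D) (ζ ^ (2 * n)) (ζb ^ (2 * n)) := hQ n
  have hPn : P n = twistedTrace (Real.sqrt D) (β ^ 2 * ζ ^ (2 * n)) (βb ^ 2 * ζb ^ (2 * n)) := hP n
  have hQne : Q n ≠ 0 := hQn ▸ twistedTrace_ne_zero hs.ne' (by
    rw [abs_pow, abs_pow]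
    exact pow_lt_pow_left₀ (hζbsmall.trans hζbig) (abs_nonneg _) (by omega))
  have hunit : |ζ ^ (2 * n) * ζb ^ (2 * n)| = 1 := by rw [← mul_pow, abs_pow, hnorm, one_pow]
  have hsmall : |ζb ^ (2 * n)| ≤ 1 := by rw [abs_pow]; exact pow_le_one₀ (abs_nonneg _) hζbsmall.le
  rw [le_div_iff₀ (abs_pos.mpr hQne), hQn, hPn, hα]
  linarith [abs_twistedTrace_mul_sub_mul_abs_le (s := Real.sqrt D) (c := β ^ 2) (cb := βb ^ 2)
    hunit hsmall]

/-- Let `ζ = u + v√D ∈ O_K` with `N(ζ) = ±1` and `|ζ| > 1 > |ζ̄|`, and `β = a + b√D ∈ O_K`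
with `β ∉ ℚ` and `|β| > |β̄|`. Set `α = β²`, `P_n = ttr(β²ζ^{2n})` and `Q_n = ttr(ζ^{2n})`.
Then there is a constant `C = C(α, D)` with `|Q_n α - P_n| ≤ C/|Q_n|` for all large `n`. -/
theorem twisted_trace_approximation
    (D : ℕ) (hD : Squarefree D) (hD1 : 1 < D)
    (u v : ℚ) (ζ ζb : ℝ) (hζ : ζ = u + v * Real.sqrt D) (hζb : ζb = u - v * Real.sqrt D)
    (hζint : ∃ t n : ℤ, (t : ℝ) = ζ + ζb ∧ (n : ℝ) = ζ * ζb)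
    (hζnorm : ζ * ζb = 1 ∨ ζ * ζb = -1)
    (hζbig : 1 < |ζ|) (hζbsmall : |ζb| < 1)
    (a b : ℚ) (hb : b ≠ 0)
    (β βb : ℝ) (hβ : β = a + b * Real.sqrt D) (hβb : βb = a - b * Real.sqrt D)
    (hβint : ∃ t n : ℤ, (t : ℝ) = β + βb ∧ (n : ℝ) = β * βb)
    (hβbig : |βb| < |β|)
    (α : ℝ) (hα : α = β ^ 2)
    (P Q : ℕ → ℝ)
    (hP : ∀ n, P n = (β ^ 2 * ζ ^ (2 * n) - βb ^ 2 * ζb ^ (2 * n)) * Real.sqrt D)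
    (hQ : ∀ n, Q n = (ζ ^ (2 * n) - ζb ^ (2 * n)) * Real.sqrt D) :
    ∃ C : ℝ, 0 < C ∧ ∃ N₀ : ℕ, ∀ n ≥ N₀, |Q n * α - P n| ≤ C / |Q n| :=
  twisted_trace_approximation_general D hD1 ζ ζb hζnorm hζbig hζbsmall β βb α hα P Q hP hQ
end

section
/- Let ζ ∈ O_K with ζ > 1 > |ζ̄| and N(ζ) = 1 in a real quadratic field K = ℚ(√D). Then for all sufficiently large n, both integer factors ttr(ζ^n) and tr(ζ^n) of Q_n = ttr(ζ^{2n}) satisfy min(|ttr(ζ^n)|, |tr(ζ^n)|) ≥ c·|Q_n|^{1/2} for a constant c = c(D) > 0; i.e., the sequence Q_n is strongly evenly divisible. -/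
/-!
`Q_n = ttr(ζ^{2n})` factors as `ttr(ζ^n) · tr(ζ^n)`. Writing `x = ζ^n` and `y = ζ̄^n = x⁻¹`, the two
factors are `(x - y)√D` and `x + y`, whose ratio tends to `√D`; once `x ≥ 2y` each factor is at most
`3√D` times the other, and two comparable factors of a product are each at least a fixed multiple of
its square root.
-/

lemma sqrt_mul_le_sqrt_mul_min {a b K : ℝ} (ha : 0 ≤ a) (hb : 0 ≤ b)
    (hab : a ≤ K * b) (hba : b ≤ K * a) : √(a * b) ≤ √K * min a b := by
  rcases le_total a b with h | h
  · calc √(a * b) ≤ √(K * a ^ 2) := Real.sqrt_le_sqrt (by nlinarith)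
      _ = √K * min a b := by rw [Real.sqrt_mul' _ (sq_nonneg a), Real.sqrt_sq ha, min_eq_left h]
  · calc √(a * b) ≤ √(K * b ^ 2) := Real.sqrt_le_sqrt (by nlinarith)
      _ = √K * min a b := by rw [Real.sqrt_mul' _ (sq_nonneg b), Real.sqrt_sq hb, min_eq_right h]

section
variable {x y s : ℝ}

lemma sub_mul_le_three_mul_add (hy : 0 ≤ y) (hxy : 2 * y ≤ x) (hs : 1 ≤ s) :
    (x - y) * s ≤ 3 * s * (x + y) := by
  nlinarith

lemma add_le_three_mul_sub_mul (hy : 0 ≤ y) (hxy : 2 * y ≤ x) (hs : 1 ≤ s) :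
    x + y ≤ 3 * s * ((x - y) * s) := by
  have hsub : 0 ≤ x - y := by linarith
  calc x + y ≤ 3 * 1 * ((x - y) * 1) := by linarith
    _ ≤ 3 * s * ((x - y) * s) := by gcongr

end

theorem twisted_trace_strongly_evenly_divisible_general
    (D : ℕ) (hD1 : 1 < D)
    (ζ ζb : ℝ)
    (hζnorm : ζ * ζb = 1)
    (hζbig : 1 < ζ)
    (Q : ℕ → ℝ) (hQ : ∀ n, Q n = (ζ ^ (2 * n) - ζb ^ (2 * n)) * Real.sqrt D) :
    ∃ c : ℝ, 0 < c ∧ ∃ N₀ : ℕ, ∀ n ≥ N₀,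
      c * |Q n| ^ ((1 : ℝ) / 2) ≤
        min |(ζ ^ n - ζb ^ n) * Real.sqrt D| |ζ ^ n + ζb ^ n| := by
  have hζb : 0 < ζb := pos_of_mul_pos_right (hζnorm ▸ one_pos) (by linarith)
  have hζb1 : ζb < 1 := by nlinarith
  have hsD : 1 ≤ √(D : ℝ) := Real.one_le_sqrt.2 (by exact_mod_cast hD1.le)
  obtain ⟨N₀, hN₀⟩ := pow_unbounded_of_one_lt (2 : ℝ) hζbig
  refine ⟨(√(3 * √(D : ℝ)))⁻¹, by positivity, N₀, fun n hn => ?_⟩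
  have hy : 0 ≤ ζb ^ n := by positivity
  have hxy : 2 * ζb ^ n ≤ ζ ^ n := by
    nlinarith [pow_le_one₀ hζb.le hζb1.le (n := n), pow_le_pow_right₀ hζbig.le hn]
  have hQn : Q n = (ζ ^ n - ζb ^ n) * √(D : ℝ) * (ζ ^ n + ζb ^ n) := by
    rw [hQ, pow_mul', pow_mul']
    ring
  have httr : 0 ≤ (ζ ^ n - ζb ^ n) * √(D : ℝ) := by nlinarith
  have htr : 0 ≤ ζ ^ n + ζb ^ n := by linarith
  rw [hQn, abs_of_nonneg (mul_nonneg httr htr), abs_of_nonneg httr, abs_of_nonneg htr,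
    ← Real.sqrt_eq_rpow, inv_mul_le_iff₀ (by positivity)]
  exact sqrt_mul_le_sqrt_mul_min httr htr (sub_mul_le_three_mul_add hy hxy hsD)
    (add_le_three_mul_sub_mul hy hxy hsD)

/-- Let `ζ` be a Pell unit of `K = ℚ(√D)` (`N(ζ) = 1`, `ζ > 1 > |ζ̄|`). Then for all large `n`
the two integer factors `ttr(ζ^n)` and `tr(ζ^n)` of `Q_n = ttr(ζ^{2n})` satisfy
`min(|ttr(ζ^n)|, |tr(ζ^n)|) ≥ c·|Q_n|^{1/2}` for a constant `c = c(D) > 0`; i.e. the sequence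
`Q_n` is strongly evenly divisible. -/
theorem twisted_trace_strongly_evenly_divisible
    (D : ℕ) (hD : Squarefree D) (hD1 : 1 < D)
    (u v : ℚ) (ζ ζb : ℝ) (hζ : ζ = u + v * Real.sqrt D) (hζb : ζb = u - v * Real.sqrt D)
    (hζint : ∃ t n : ℤ, (t : ℝ) = ζ + ζb ∧ (n : ℝ) = ζ * ζb)
    (hζnorm : ζ * ζb = 1)
    (hζbig : 1 < ζ) (hζbsmall : |ζb| < 1)
    (Q : ℕ → ℝ) (hQ : ∀ n, Q n = (ζ ^ (2 * n) - ζb ^ (2 * n)) * Real.sqrt D) :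
    ∃ c : ℝ, 0 < c ∧ ∃ N₀ : ℕ, ∀ n ≥ N₀,
      c * |Q n| ^ ((1 : ℝ) / 2) ≤
        min |(ζ ^ n - ζb ^ n) * Real.sqrt D| |ζ ^ n + ζb ^ n| :=
  twisted_trace_strongly_evenly_divisible_general D hD1 ζ ζb hζnorm hζbig Q hQ
end
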